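/- For every integer n ≥ 2 and every real β > 0, the sum over all set partitions P of {1,…,n} of p(P | β) · ( #P/β² − Σ_{j=0}^{n-1} 1/(β+j)² ) equals (1/β)·Σ_{j=1}^{n-1} j/(β+j)², where p(P | β) = β^{#P} · Π_{B ∈ P} (|B| − 1)! / (β(β+1)⋯(β+n−1)). That is, the Fisher information of the Multivariate Ewens Distribution with respect to β equals (1/β)Σ_{j=1}^{n-1} j/(β+j)², so the Jeffreys prior is π_n^J(β) ∝ sqrt( (1/β)Σ_{j=1}^{n-1} j/(β+j)² ). -/

import Mathlib

/-!
Every partition of `insert a s` arises exactly once from a partition `P` of `s`, either by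
opening the new block `{a}` or by adding `a` to a block `c ∈ P`. The first choice multiplies the
weight `x ^ #P * ∏ B ∈ P, (#B - 1)!` by `x`, the second by `#c`, and the block sizes of `P` add up
to `#s`; so summing the weight over all partitions of an `n`-set gives the rising factorial
`x (x + 1) ⋯ (x + n - 1)`. Applying `x d/dx` to this identity at `x = β` gives the mean number
of blocks `E{K} = ∑_{j < n} β / (β + j)`, and then
`E{K} / β² - ∑_{j < n} 1 / (β + j)² = ∑_{j < n} j / (β (β + j)²)`.
-/

open Finset

open Classical in
/-- The set of all set partitions of `{1,…,n}` (encoded as `Fin n`):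
families of nonempty blocks such that each element lies in exactly one block. -/
noncomputable def setPartitions (n : ℕ) : Finset (Finset (Finset (Fin n))) :=
  Finset.univ.filter (fun P => ∅ ∉ P ∧ ∀ i : Fin n, ∃! B, B ∈ P ∧ i ∈ B)

open Polynomial
open scoped Nat

section SetPartition

variable {α : Type*}

structure IsSetPartition (s : Finset α) (P : Finset (Finset α)) : Prop where
  empty_notMem : ∅ ∉ P
  mem_iff : ∀ i, i ∈ s ↔ ∃ B ∈ P, i ∈ B
  eq_of_mem : ∀ B ∈ P, ∀ B' ∈ P, ∀ i ∈ B, i ∈ B' → B = B'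

/-- `c` is a block of `P`, or `∅` to open the new block `{a}`. -/
def insertIntoBlock [DecidableEq α] (a : α) (P : Finset (Finset α)) (c : Finset α) :
    Finset (Finset α) :=
  insert (insert a c) (P.erase c)

/-- `A` is the block of `Q` containing `a`. -/
def removeFromBlock [DecidableEq α] (a : α) (Q : Finset (Finset α)) (A : Finset α) :
    Finset (Finset α) :=
  (insert (A.erase a) (Q.erase A)).erase ∅

lemma Finset.erase_empty_insert_erase [DecidableEq α] {P : Finset (Finset α)} {c : Finset α}
    (hP : ∅ ∉ P) (hc : c ∈ insert ∅ P) : (insert c (P.erase c)).erase ∅ = P := by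
  rcases mem_insert.1 hc with rfl | hc
  · rw [erase_insert (notMem_erase _ _), erase_eq_of_notMem hP]
  · rw [insert_erase hc, erase_eq_of_notMem hP]

variable {s : Finset α} {P P' Q : Finset (Finset α)} {a : α} {c c' A : Finset α}

lemma isSetPartition_iff_existsUnique :
    IsSetPartition s P ↔ (∀ B ∈ P, B ⊆ s) ∧ ∅ ∉ P ∧ ∀ i ∈ s, ∃! B, B ∈ P ∧ i ∈ B := by
  refine ⟨fun hP => ⟨fun B hB i hi => (hP.mem_iff i).2 ⟨B, hB, hi⟩, hP.empty_notMem,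
    fun i hi => ?_⟩, ?_⟩
  · obtain ⟨B, hB, hiB⟩ := (hP.mem_iff i).1 hi
    exact ⟨B, ⟨hB, hiB⟩, fun B' hB' => hP.eq_of_mem B' hB'.1 B hB i hB'.2 hiB⟩
  · rintro ⟨hsub, hempty, huniq⟩
    refine ⟨hempty, fun i => ⟨fun hi => (huniq i hi).exists, ?_⟩, ?_⟩
    · rintro ⟨B, hB, hiB⟩
      exact hsub B hB hiB
    · intro B hB B' hB' i hi hi'
      exact (huniq i (hsub B hB hi)).unique ⟨hB, hi⟩ ⟨hB', hi'⟩

namespace IsSetPartition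

lemma subset (hP : IsSetPartition s P) {B : Finset α} (hB : B ∈ P) : B ⊆ s :=
  (isSetPartition_iff_existsUnique.1 hP).1 B hB

lemma notMem_of_mem (hP : IsSetPartition s P) (ha : a ∉ s) {B : Finset α} (hB : B ∈ P) :
    a ∉ B :=
  fun h => ha (hP.subset hB h)

variable [DecidableEq α]

lemma sum_card (hP : IsSetPartition s P) : ∑ B ∈ P, #B = #s := by
  rw [← card_biUnion fun B hB B' hB' hne =>
    disjoint_left.2 fun i hi hi' => hne (hP.eq_of_mem B hB B' hB' i hi hi')]
  congr
  ext i
  simp [hP.mem_iff]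

lemma notMem_of_mem_insert_empty (hP : IsSetPartition s P) (ha : a ∉ s) (hc : c ∈ insert ∅ P) :
    a ∉ c := by
  rcases mem_insert.1 hc with rfl | hc
  · exact notMem_empty a
  · exact hP.notMem_of_mem ha hc

lemma erase_insertIntoBlock (hP : IsSetPartition s P) (ha : a ∉ s) :
    (insertIntoBlock a P c).erase (insert a c) = P.erase c :=
  erase_insert fun h => hP.notMem_of_mem ha (mem_of_mem_erase h) (mem_insert_self a c)

lemma removeFromBlock_insertIntoBlock (hP : IsSetPartition s P) (ha : a ∉ s)
    (hc : c ∈ insert ∅ P) : removeFromBlock a (insertIntoBlock a P c) (insert a c) = P := by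
  rw [removeFromBlock, erase_insert (hP.notMem_of_mem_insert_empty ha hc),
    hP.erase_insertIntoBlock ha, erase_empty_insert_erase hP.empty_notMem hc]

lemma insertIntoBlock_removeFromBlock (hQ : IsSetPartition s Q) (hA : A ∈ Q) (haA : a ∈ A) :
    insertIntoBlock a (removeFromBlock a Q A) (A.erase a) = Q := by
  have hc : A.erase a ∉ Q.erase A := by
    intro h
    obtain ⟨i, hi⟩ := nonempty_iff_ne_empty.2
      (ne_of_mem_of_not_mem (mem_of_mem_erase h) hQ.empty_notMem)
    exact ne_of_mem_erase h (hQ.eq_of_mem _ (mem_of_mem_erase h) _ hA i hi (mem_of_mem_erase hi))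
  rw [insertIntoBlock, removeFromBlock, erase_right_comm, erase_insert hc, insert_erase haA,
    erase_eq_of_notMem (fun h => hQ.empty_notMem (mem_of_mem_erase h)), insert_erase hA]

lemma eq_of_insertIntoBlock_eq (hP : IsSetPartition s P) (hP' : IsSetPartition s P')
    (ha : a ∉ s) (hc : c ∈ insert ∅ P) (hc' : c' ∈ insert ∅ P')
    (h : insertIntoBlock a P c = insertIntoBlock a P' c') : P = P' ∧ c = c' := by
  obtain rfl : c = c' := by
    have hmem : insert a c ∈ insertIntoBlock a P' c' := h ▸ mem_insert_self _ _
    rcases mem_insert.1 hmem with heq | hmem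
    · simpa [erase_insert (hP.notMem_of_mem_insert_empty ha hc),
        erase_insert (hP'.notMem_of_mem_insert_empty ha hc')] using congrArg (·.erase a) heq
    · exact absurd (mem_insert_self a c) (hP'.notMem_of_mem ha (mem_of_mem_erase hmem))
  refine ⟨?_, rfl⟩
  rw [← hP.removeFromBlock_insertIntoBlock ha hc, h, hP'.removeFromBlock_insertIntoBlock ha hc']

end IsSetPartition

lemma isSetPartition_empty_iff : IsSetPartition (∅ : Finset α) P ↔ P = ∅ := by
  refine ⟨fun hP => eq_empty_of_forall_notMem fun _ hB =>
    hP.empty_notMem (subset_empty.1 (hP.subset hB) ▸ hB), ?_⟩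
  rintro rfl
  exact ⟨notMem_empty _, by simp, by simp⟩

variable [DecidableEq α]

lemma isSetPartition_insertIntoBlock (hP : IsSetPartition s P) (ha : a ∉ s)
    (hc : c ∈ insert ∅ P) : IsSetPartition (insert a s) (insertIntoBlock a P c) := by
  have hc' : c = ∅ ∨ c ∈ P := mem_insert.1 hc
  have hac := hP.notMem_of_mem_insert_empty ha hc
  have haP : ∀ B ∈ P, a ∉ B := fun B hB => hP.notMem_of_mem ha hB
  have := hP.empty_notMem
  have := hP.mem_iff
  have := hP.eq_of_mem
  refine ⟨?_, fun i => ?_, ?_⟩ <;> simp only [insertIntoBlock, mem_insert, mem_erase] <;> grind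

lemma isSetPartition_removeFromBlock (hQ : IsSetPartition (insert a s) Q) (ha : a ∉ s)
    (hA : A ∈ Q) (haA : a ∈ A) : IsSetPartition s (removeFromBlock a Q A) := by
  have hblock : ∀ B ∈ Q, a ∈ B → B = A := fun B hB h => hQ.eq_of_mem B hB A hA a h haA
  have hsub : ∀ B ∈ Q, ∀ i ∈ B, i = a ∨ i ∈ s :=
    fun B hB i hi => mem_insert.1 (hQ.subset hB hi)
  have hcov : ∀ i ∈ s, ∃ B ∈ Q, i ∈ B := fun i hi => (hQ.mem_iff i).1 (mem_insert_of_mem hi)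
  have := hQ.eq_of_mem
  refine ⟨notMem_erase _ _, fun i => ?_, ?_⟩ <;>
    simp only [removeFromBlock, mem_erase, mem_insert] <;> grind

end SetPartition

open Classical in
noncomputable def setPartitionsOf {α : Type*} (s : Finset α) : Finset (Finset (Finset α)) :=
  {P ∈ s.powerset.powerset | IsSetPartition s P}

section SetPartitionsOf

variable {α : Type*} {s : Finset α} {P : Finset (Finset α)}

@[simp]
lemma mem_setPartitionsOf : P ∈ setPartitionsOf s ↔ IsSetPartition s P := by
  simp only [setPartitionsOf, mem_filter, mem_powerset, and_iff_right_iff_imp]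
  exact fun hP B hB => mem_powerset.2 (hP.subset hB)

lemma setPartitionsOf_empty : setPartitionsOf (∅ : Finset α) = {∅} := by
  ext P
  simp [isSetPartition_empty_iff]

lemma sum_setPartitionsOf_insert [DecidableEq α] {M : Type*} [AddCommMonoid M]
    (f : Finset (Finset α) → M) {a : α} (ha : a ∉ s) :
    ∑ Q ∈ setPartitionsOf (insert a s), f Q =
      ∑ P ∈ setPartitionsOf s, ∑ c ∈ insert ∅ P, f (insertIntoBlock a P c) := by
  rw [sum_sigma']
  symm
  refine sum_bij (fun x _ => insertIntoBlock a x.1 x.2) ?_ ?_ ?_ fun _ _ => rfl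
  · rintro ⟨P, c⟩ h
    simp only [mem_sigma, mem_setPartitionsOf] at h ⊢
    exact isSetPartition_insertIntoBlock h.1 ha h.2
  · rintro ⟨P, c⟩ h ⟨P', c'⟩ h' heq
    simp only [mem_sigma, mem_setPartitionsOf] at h h'
    obtain ⟨rfl, rfl⟩ := h.1.eq_of_insertIntoBlock_eq h'.1 ha h.2 h'.2 heq
    rfl
  · intro Q hQ
    rw [mem_setPartitionsOf] at hQ
    obtain ⟨A, hA, haA⟩ := (hQ.mem_iff a).1 (mem_insert_self a s)
    refine ⟨⟨removeFromBlock a Q A, A.erase a⟩, ?_, hQ.insertIntoBlock_removeFromBlock hA haA⟩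
    rw [mem_sigma, mem_setPartitionsOf]
    refine ⟨isSetPartition_removeFromBlock hQ ha hA haA, ?_⟩
    by_cases h : A.erase a = ∅
    · simp [h]
    · exact mem_insert_of_mem (mem_erase.2 ⟨h, mem_insert_self _ _⟩)

lemma setPartitions_eq_setPartitionsOf_univ (n : ℕ) : setPartitions n = setPartitionsOf univ := by
  ext P
  simp [setPartitions, isSetPartition_iff_existsUnique]

end SetPartitionsOf

/-- On a set of size `n`, the Ewens probability of `P` is
`ewensWeight β P / (β (β + 1) ⋯ (β + n - 1))`. -/
def ewensWeight {α R : Type*} [CommSemiring R] (x : R) (P : Finset (Finset α)) : R :=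
  x ^ #P * ∏ B ∈ P, ((#B - 1)! : R)

section EwensWeight

variable {α R : Type*} [CommSemiring R] [DecidableEq α] {s : Finset α} {P : Finset (Finset α)}
  {a : α} {c : Finset α}

lemma IsSetPartition.ewensWeight_insertIntoBlock_empty (hP : IsSetPartition s P) (ha : a ∉ s)
    (x : R) : ewensWeight x (insertIntoBlock a P ∅) = x * ewensWeight x P := by
  have hnot : {a} ∉ P := fun h => hP.notMem_of_mem ha h (mem_singleton_self a)
  rw [insertIntoBlock, erase_eq_of_notMem hP.empty_notMem, insert_empty, ewensWeight,
    ewensWeight, card_insert_of_notMem hnot, prod_insert hnot, card_singleton]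
  simp only [Nat.sub_self, Nat.factorial_zero, Nat.cast_one, one_mul]
  ring

lemma IsSetPartition.ewensWeight_insertIntoBlock_of_mem (hP : IsSetPartition s P) (ha : a ∉ s)
    (hc : c ∈ P) (x : R) : ewensWeight x (insertIntoBlock a P c) = #c * ewensWeight x P := by
  have hnot : insert a c ∉ P.erase c :=
    fun h => hP.notMem_of_mem ha (mem_of_mem_erase h) (mem_insert_self a c)
  have hcard : #c ≠ 0 :=
    card_ne_zero.2 (nonempty_iff_ne_empty.2 (ne_of_mem_of_not_mem hc hP.empty_notMem))
  rw [ewensWeight, ewensWeight, insertIntoBlock, card_insert_of_notMem hnot,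
    card_erase_add_one hc, prod_insert hnot, card_insert_of_notMem (hP.notMem_of_mem ha hc),
    ← mul_prod_erase P _ hc, Nat.add_sub_cancel, ← Nat.mul_factorial_pred hcard]
  push_cast
  ring

end EwensWeight

theorem sum_ewensWeight_setPartitionsOf {α R : Type*} [CommSemiring R] (x : R) (s : Finset α) :
    ∑ P ∈ setPartitionsOf s, ewensWeight x P = ∏ j ∈ range #s, (x + j) := by
  classical
  induction s using Finset.induction_on with
  | empty => simp [setPartitionsOf_empty, ewensWeight]
  | insert a s ha ih =>
    have hstep : ∀ P ∈ setPartitionsOf s,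
        ∑ c ∈ insert ∅ P, ewensWeight x (insertIntoBlock a P c) = (x + #s) * ewensWeight x P := by
      intro P hP
      rw [mem_setPartitionsOf] at hP
      rw [sum_insert hP.empty_notMem, hP.ewensWeight_insertIntoBlock_empty ha,
        sum_congr rfl fun c hc => hP.ewensWeight_insertIntoBlock_of_mem ha hc x, ← sum_mul,
        ← Nat.cast_sum, hP.sum_card, add_mul]
    rw [sum_setPartitionsOf_insert _ ha, sum_congr rfl hstep, ← mul_sum, ih,
      card_insert_of_notMem ha, prod_range_succ, mul_comm]

lemma eval_X_mul_derivative_ewensWeight {α R : Type*} [CommSemiring R] (P : Finset (Finset α))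
    (x : R) : (X * derivative (ewensWeight X P)).eval x = #P * ewensWeight x P := by
  rw [ewensWeight, ewensWeight, ← Nat.cast_prod, ← Nat.cast_prod, mul_comm (X ^ #P : R[X]),
    derivative_natCast_mul, derivative_X_pow]
  rcases Nat.eq_zero_or_pos #P with h | h
  · simp [h]
  · simp only [eval_mul, eval_X, eval_natCast, eval_C, eval_pow]
    rw [← pow_sub_one_mul h.ne']
    ring

theorem sum_card_mul_ewensWeight_setPartitionsOf {α K : Type*} [Field K] (s : Finset α) {x : K}
    (hx : ∀ j ∈ range #s, x + j ≠ 0) :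
    ∑ P ∈ setPartitionsOf s, #P * ewensWeight x P =
      (∏ j ∈ range #s, (x + j)) * ∑ j ∈ range #s, x / (x + j) := by
  have h := congrArg (fun p : K[X] => (X * derivative p).eval x)
    (sum_ewensWeight_setPartitionsOf (X : K[X]) s)
  simp only [derivative_sum, mul_sum, eval_finsetSum, eval_X_mul_derivative_ewensWeight] at h
  rw [h, derivative_prod_finset, mul_sum, eval_finsetSum, mul_sum]
  refine sum_congr rfl fun i hi => ?_
  simp only [derivative_add, derivative_X, derivative_natCast, add_zero, mul_one, eval_mul,
    eval_X, eval_prod, eval_add, eval_natCast]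
  rw [← mul_prod_erase _ _ hi]
  field_simp [hx i hi]

lemma sum_Icc_one_pred_eq_sum_range {M : Type*} [AddCommMonoid M] {f : ℕ → M} (hf : f 0 = 0)
    (n : ℕ) : ∑ j ∈ Icc 1 (n - 1), f j = ∑ j ∈ range n, f j := by
  refine sum_subset (fun j hj => ?_) fun j hj hj' => ?_
  · simp only [mem_Icc, mem_range] at hj ⊢
    omega
  · simp only [mem_Icc, mem_range] at hj hj'
    obtain rfl : j = 0 := by omega
    exact hf

theorem med_fisher_information_general (n : ℕ) (β : ℝ) (hβ : 0 < β) :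
    ∑ P ∈ setPartitions n,
        (β ^ P.card * ∏ B ∈ P, (Nat.factorial (B.card - 1) : ℝ)) /
            (∏ j ∈ Finset.range n, (β + j)) *
          ((P.card : ℝ) / β ^ 2 - ∑ j ∈ Finset.range n, 1 / (β + j) ^ 2) =
      (1 / β) * ∑ j ∈ Finset.Icc 1 (n - 1), (j : ℝ) / (β + j) ^ 2 := by
  have hpos : ∀ j : ℕ, 0 < β + j := fun j => by positivity
  have hD : ∏ j ∈ range n, (β + j) ≠ 0 := prod_ne_zero_iff.2 fun j _ => (hpos j).ne'
  have hZ := sum_ewensWeight_setPartitionsOf β (univ : Finset (Fin n))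
  have hK := sum_card_mul_ewensWeight_setPartitionsOf (univ : Finset (Fin n)) (x := β)
    fun j _ => (hpos j).ne'
  rw [Finset.card_fin] at hZ hK
  rw [setPartitions_eq_setPartitionsOf_univ]
  calc _ = (∑ P ∈ setPartitionsOf univ, #P * ewensWeight β P) / (∏ j ∈ range n, (β + j)) / β ^ 2
          - (∑ P ∈ setPartitionsOf univ, ewensWeight β P) / (∏ j ∈ range n, (β + j)) *
            ∑ j ∈ range n, 1 / (β + j) ^ 2 := by
        rw [sum_div, sum_div, sum_div, sum_mul, ← sum_sub_distrib]
        exact sum_congr rfl fun P _ => by rw [ewensWeight]; ring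
    _ = ∑ j ∈ range n, (β / (β + j) / β ^ 2 - 1 / (β + j) ^ 2) := by
        rw [hZ, hK, mul_div_cancel_left₀ _ hD, div_self hD, one_mul, sum_div, sum_sub_distrib]
    _ = 1 / β * ∑ j ∈ range n, (j : ℝ) / (β + j) ^ 2 := by
        rw [mul_sum]
        refine sum_congr rfl fun j _ => ?_
        field_simp [(hpos j).ne']
        ring
    _ = _ := by rw [sum_Icc_one_pred_eq_sum_range (by simp)]

/-- The Fisher information of the Multivariate Ewens Distribution:
`Σ_P p(P | β) · ( #P/β² − Σ_{j=0}^{n-1} 1/(β+j)² ) = (1/β)·Σ_{j=1}^{n-1} j/(β+j)²`,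
where `p(P | β) = β^{#P} · Π_{B ∈ P} (|B| − 1)! / (β(β+1)⋯(β+n−1))`. -/
theorem med_fisher_information (n : ℕ) (hn : 2 ≤ n) (β : ℝ) (hβ : 0 < β) :
    ∑ P ∈ setPartitions n,
        (β ^ P.card * ∏ B ∈ P, (Nat.factorial (B.card - 1) : ℝ)) /
            (∏ j ∈ Finset.range n, (β + j)) *
          ((P.card : ℝ) / β ^ 2 - ∑ j ∈ Finset.range n, 1 / (β + j) ^ 2) =
      (1 / β) * ∑ j ∈ Finset.Icc 1 (n - 1), (j : ℝ) / (β + j) ^ 2 :=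
  med_fisher_information_general n β hβ
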